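/- arXiv:1806.06930 — 2 statements merged into one kernel-verified Lean document; each statement's English description precedes it below -/
import Mathlib

section
/- Let Γ(ε) be a positive bounded linear operator on a Hilbert space X. Then for every ε > 0 the strict inequality ‖ε(εI + Γ(ε))⁻¹ π_M‖ < 1 holds in operator norm. -/
open scoped RealInnerProductSpace
open Filter

/-- The orthogonal projection `π_M` of `X` onto the subspace `M`, as a continuous linear map. -/
noncomputable def finProj {X : Type*} [NormedAddCommGroup X] [InnerProductSpace ℝ X]
    (M : Submodule ℝ X) [CompleteSpace M] : X →L[ℝ] X :=
  M.subtypeL ∘L M.orthogonalProjection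

/-!
Write `y = R m`, so that `m = ε y + Γ y`. Expanding the square,
`‖m‖² = ε²‖y‖² + 2ε⟪Γ y, y⟫ + ‖Γ y‖² > ε²‖y‖²` for `m ≠ 0`, i.e. `ε R` strictly shrinks every
nonzero vector. On the unit sphere of the finite-dimensional space `M` the continuous function
`m ↦ ‖ε R m‖` attains its maximum, which is therefore `< 1`; as `‖π_M‖ ≤ 1`, this bounds the norm
of `ε R π_M`.
-/

theorem ContinuousLinearMap.opNorm_lt_one_of_norm_apply_lt
    {E F : Type*} [NormedAddCommGroup E] [NormedSpace ℝ E] [FiniteDimensional ℝ E]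
    [NormedAddCommGroup F] [NormedSpace ℝ F]
    (T : E →L[ℝ] F) (hT : ∀ x, x ≠ 0 → ‖T x‖ < ‖x‖) : ‖T‖ < 1 := by
  rcases subsingleton_or_nontrivial E with hE | hE
  · simp [T.opNorm_subsingleton]
  have hcont : Continuous fun x => ‖T x‖ := by fun_prop
  obtain ⟨x₀, hx₀, hmax⟩ := (isCompact_sphere (0 : E) 1).exists_isMaxOn
    (NormedSpace.sphere_nonempty.mpr zero_le_one) hcont.continuousOn
  rw [mem_sphere_zero_iff_norm] at hx₀
  have hx₀_ne : x₀ ≠ 0 := ne_zero_of_norm_ne_zero (hx₀.symm ▸ one_ne_zero)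
  have hlt : ‖T x₀‖ < 1 := hx₀ ▸ hT x₀ hx₀_ne
  refine lt_of_le_of_lt (T.opNorm_le_of_unit_norm (norm_nonneg _) fun x hx => ?_) hlt
  exact hmax (mem_sphere_zero_iff_norm.mpr hx)

theorem mul_norm_lt_norm_smul_add_of_inner_pos
    {X : Type*} [NormedAddCommGroup X] [InnerProductSpace ℝ X]
    {ε : ℝ} (hε : 0 < ε) {y z : X} (hzy : 0 < ⟪z, y⟫) : ε * ‖y‖ < ‖ε • y + z‖ := by
  have hsq : ‖ε • y + z‖ ^ 2 = (ε * ‖y‖) ^ 2 + 2 * ε * ⟪z, y⟫ + ‖z‖ ^ 2 := by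
    rw [norm_add_sq_real, norm_smul, real_inner_smul_left, real_inner_comm,
      Real.norm_eq_abs, abs_of_pos hε]
    ring
  refine lt_of_pow_lt_pow_left₀ 2 (norm_nonneg _) ?_
  nlinarith [sq_nonneg ‖z‖]

theorem norm_smul_apply_lt_of_comp_eq_one
    {X : Type*} [NormedAddCommGroup X] [InnerProductSpace ℝ X]
    {ε : ℝ} (hε : 0 < ε) {Γ R : X →L[ℝ] X} (hΓpos : ∀ x : X, x ≠ 0 → 0 < ⟪Γ x, x⟫)
    (hR : (ε • (1 : X →L[ℝ] X) + Γ) ∘L R = 1) {m : X} (hm : m ≠ 0) :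
    ‖(ε • R) m‖ < ‖m‖ := by
  have hm_eq : ε • R m + Γ (R m) = m := by simpa using congrArg (· m) hR
  have hRm : R m ≠ 0 := fun h => hm (by simpa [h] using hm_eq.symm)
  calc ‖(ε • R) m‖ = ε * ‖R m‖ := by
        rw [smul_apply, norm_smul, Real.norm_eq_abs, abs_of_pos hε]
    _ < ‖ε • R m + Γ (R m)‖ := mul_norm_lt_norm_smul_add_of_inner_pos hε (hΓpos _ hRm)
    _ = ‖m‖ := by rw [hm_eq]

theorem norm_eps_resolvent_proj_lt_one_general
    {X : Type*} [NormedAddCommGroup X] [InnerProductSpace ℝ X]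
    (M : Submodule ℝ X) [FiniteDimensional ℝ M]
    (ε : ℝ) (hε : 0 < ε) (Γ : X →L[ℝ] X)
    (hΓpos : ∀ x : X, x ≠ 0 → 0 < ⟪Γ x, x⟫)
    (R : X →L[ℝ] X)
    (hR : R ∘L (ε • (1 : X →L[ℝ] X) + Γ) = 1 ∧ (ε • (1 : X →L[ℝ] X) + Γ) ∘L R = 1) :
    ‖ε • (R ∘L finProj M)‖ < 1 := by
  have hrestrict : ‖(ε • R) ∘L M.subtypeL‖ < 1 :=
    ContinuousLinearMap.opNorm_lt_one_of_norm_apply_lt _ fun m hm =>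
      norm_smul_apply_lt_of_comp_eq_one hε hΓpos hR.2 (by simpa using hm)
  calc ‖ε • (R ∘L finProj M)‖
      = ‖((ε • R) ∘L M.subtypeL) ∘L M.orthogonalProjectionOnto‖ := rfl
    _ ≤ ‖(ε • R) ∘L M.subtypeL‖ * ‖M.orthogonalProjectionOnto‖ := by
        apply ContinuousLinearMap.opNorm_comp_le
    _ ≤ ‖(ε • R) ∘L M.subtypeL‖ * 1 := by gcongr; exact M.orthogonalProjectionOnto_norm_le
    _ < 1 := by simpa using hrestrict

/-- Let `Γ(ε)` be a positive bounded linear operator on a Hilbert space `X`.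
Then for every `ε > 0` the strict inequality `‖ε(εI + Γ(ε))⁻¹ π_M‖ < 1` holds. -/
theorem norm_eps_resolvent_proj_lt_one
    {X : Type*} [NormedAddCommGroup X] [InnerProductSpace ℝ X] [CompleteSpace X]
    (M : Submodule ℝ X) [FiniteDimensional ℝ M]
    (ε : ℝ) (hε : 0 < ε) (Γ : X →L[ℝ] X)
    (hΓsa : IsSelfAdjoint Γ)
    (hΓpos : ∀ x : X, x ≠ 0 → 0 < ⟪Γ x, x⟫)
    (R : X →L[ℝ] X)
    (hR : R ∘L (ε • (1 : X →L[ℝ] X) + Γ) = 1 ∧ (ε • (1 : X →L[ℝ] X) + Γ) ∘L R = 1) :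
    ‖ε • (R ∘L finProj M)‖ < 1 :=
  norm_eps_resolvent_proj_lt_one_general M ε hε Γ hΓpos R hR
end

section
/- Let Γ be a positive bounded linear operator on a Hilbert space X and M a finite-dimensional subspace of X. If ε(εI + Γ)⁻¹h → 0 as ε → 0⁺ for every h ∈ X, then also ε(ε(I − π_M) + Γ)⁻¹h → 0 as ε → 0⁺ for every h ∈ X. -/
/-!
Write `T ε = ε (εI + Γ)⁻¹` and `u ε = ε (ε(I − π_M) + Γ)⁻¹ h`. The two operators inverted differ
by `ε π_M`, so the second resolvent identity gives `u ε = T ε h + T ε π_M (u ε)`. On the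
finite-dimensional space `M`, strong convergence `T ε → 0` is convergence in operator norm, hence
`‖T ε π_M‖ ≤ 1/2` for small `ε`, and then `‖u ε‖ ≤ 2 ‖T ε h‖ → 0`.
-/

open scoped RealInnerProductSpace
open Filter

open Topology

theorem eq_add_mul_sub_mul_of_mul_eq_one {R : Type*} [Ring R] {a b r s : R}
    (hr : r * a = 1) (hs : b * s = 1) : s = r + r * (a - b) * s :=
  calc s = r * a * s := by rw [hr, one_mul]
    _ = r * (b * s) + r * (a - b) * s := by noncomm_ring
    _ = r + r * (a - b) * s := by rw [hs, mul_one]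

section

variable {𝕜 E F α : Type*} [NontriviallyNormedField 𝕜]
  [NormedAddCommGroup E] [NormedSpace 𝕜 E] [NormedAddCommGroup F] [NormedSpace 𝕜 F]
  {l : Filter α}

theorem ContinuousLinearMap.tendsto_nhds_zero_of_tendsto_apply [CompleteSpace 𝕜]
    [FiniteDimensional 𝕜 E] {f : α → E →L[𝕜] F} (hf : ∀ x, Tendsto (fun a ↦ f a x) l (𝓝 0)) :
    Tendsto f l (𝓝 0) := by
  let v := Module.finBasis 𝕜 E
  obtain ⟨C, -, hC⟩ := v.exists_opNorm_le (F := F)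
  have hsum : Tendsto (fun a ↦ C * ∑ i, ‖f a (v i)‖) l (𝓝 0) := by
    simpa using (tendsto_finsetSum Finset.univ fun i _ ↦ (hf (v i)).norm).const_mul C
  refine squeeze_zero_norm (fun a ↦ hC (by positivity) fun i ↦ ?_) hsum
  exact Finset.single_le_sum (f := fun i ↦ ‖f a (v i)‖) (fun _ _ ↦ norm_nonneg _)
    (Finset.mem_univ i)

theorem tendsto_nhds_zero_of_eq_add_apply {u a : α → E} {Q : α → E →L[𝕜] E}
    (ha : Tendsto a l (𝓝 0)) (hQ : Tendsto Q l (𝓝 0))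
    (hu : ∀ᶠ i in l, u i = a i + Q i (u i)) : Tendsto u l (𝓝 0) := by
  have hQ_small : ∀ᶠ i in l, ‖Q i‖ ≤ 1 / 2 :=
    (tendsto_norm_zero.comp hQ).eventually (ge_mem_nhds one_half_pos)
  refine squeeze_zero_norm' ?_ (by simpa using ha.norm.const_mul 2)
  filter_upwards [hu, hQ_small] with i hui hQi
  have : ‖u i‖ ≤ ‖a i‖ + ‖Q i‖ * ‖u i‖ :=
    calc ‖u i‖ = ‖a i + Q i (u i)‖ := congrArg norm hui
      _ ≤ ‖a i‖ + ‖Q i (u i)‖ := norm_add_le _ _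
      _ ≤ ‖a i‖ + ‖Q i‖ * ‖u i‖ := by gcongr; exact (Q i).le_opNorm _
  nlinarith [norm_nonneg (u i)]

end

theorem strong_convergence_transfer_general
    {X : Type*} [NormedAddCommGroup X] [InnerProductSpace ℝ X]
    (M : Submodule ℝ X) [FiniteDimensional ℝ M]
    (Γ : X →L[ℝ] X)
    (R₁ : ℝ → (X →L[ℝ] X))
    (hR₁ : ∀ ε > (0 : ℝ),
      R₁ ε ∘L (ε • (1 : X →L[ℝ] X) + Γ) = 1 ∧ (ε • (1 : X →L[ℝ] X) + Γ) ∘L R₁ ε = 1)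
    (R₂ : ℝ → (X →L[ℝ] X))
    (hR₂ : ∀ ε > (0 : ℝ),
      R₂ ε ∘L (ε • ((1 : X →L[ℝ] X) - finProj M) + Γ) = 1 ∧
      (ε • ((1 : X →L[ℝ] X) - finProj M) + Γ) ∘L R₂ ε = 1)
    (hconv : ∀ h : X,
      Tendsto (fun ε : ℝ => ε • R₁ ε h) (nhdsWithin 0 (Set.Ioi 0)) (nhds 0)) :
    ∀ h : X, Tendsto (fun ε : ℝ => ε • R₂ ε h) (nhdsWithin 0 (Set.Ioi 0)) (nhds 0) := by
  intro h
  set T : ℝ → X →L[ℝ] X := fun ε ↦ ε • R₁ ε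
  have hT_M : Tendsto (fun ε ↦ T ε ∘L M.subtypeL) (𝓝[>] 0) (𝓝 0) :=
    ContinuousLinearMap.tendsto_nhds_zero_of_tendsto_apply fun x ↦ hconv x
  have hT_π : Tendsto (fun ε ↦ T ε * finProj M) (𝓝[>] 0) (𝓝 0) := by
    have := ((continuous_id.clm_comp_const M.orthogonalProjectionOnto).tendsto 0).comp hT_M
    rwa [id_eq, ContinuousLinearMap.zero_comp] at this
  have hresolvent : ∀ ε > (0 : ℝ), ε • R₂ ε = T ε + T ε * finProj M * (ε • R₂ ε) := by
    intro ε hε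
    have hdiff : (ε • (1 : X →L[ℝ] X) + Γ) - (ε • (1 - finProj M) + Γ) = ε • finProj M := by
      rw [smul_sub]; abel
    conv_lhs => rw [eq_add_mul_sub_mul_of_mul_eq_one (hR₁ ε hε).1 (hR₂ ε hε).2, hdiff]
    simp only [T, smul_add, smul_mul_assoc, mul_smul_comm]
  refine tendsto_nhds_zero_of_eq_add_apply (hconv h) hT_π ?_
  filter_upwards [self_mem_nhdsWithin] with ε hε
  exact congrArg (· h) (hresolvent ε hε)

/-- Let `Γ` be a positive bounded linear operator on a Hilbert space `X` and
`M` a finite-dimensional subspace. If `ε(εI + Γ)⁻¹h → 0` as `ε → 0⁺` for every `h`, then also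
`ε(ε(I − π_M) + Γ)⁻¹h → 0` as `ε → 0⁺` for every `h`. -/
theorem strong_convergence_transfer
    {X : Type*} [NormedAddCommGroup X] [InnerProductSpace ℝ X] [CompleteSpace X]
    (M : Submodule ℝ X) [FiniteDimensional ℝ M]
    (Γ : X →L[ℝ] X) (hΓsa : IsSelfAdjoint Γ)
    (hΓpos : ∀ x : X, x ≠ 0 → 0 < ⟪Γ x, x⟫)
    (R₁ : ℝ → (X →L[ℝ] X))
    (hR₁ : ∀ ε > (0 : ℝ),
      R₁ ε ∘L (ε • (1 : X →L[ℝ] X) + Γ) = 1 ∧ (ε • (1 : X →L[ℝ] X) + Γ) ∘L R₁ ε = 1)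
    (R₂ : ℝ → (X →L[ℝ] X))
    (hR₂ : ∀ ε > (0 : ℝ),
      R₂ ε ∘L (ε • ((1 : X →L[ℝ] X) - finProj M) + Γ) = 1 ∧
      (ε • ((1 : X →L[ℝ] X) - finProj M) + Γ) ∘L R₂ ε = 1)
    (hconv : ∀ h : X,
      Tendsto (fun ε : ℝ => ε • R₁ ε h) (nhdsWithin 0 (Set.Ioi 0)) (nhds 0)) :
    ∀ h : X, Tendsto (fun ε : ℝ => ε • R₂ ε h) (nhdsWithin 0 (Set.Ioi 0)) (nhds 0) :=
  strong_convergence_transfer_general M Γ R₁ hR₁ R₂ hR₂ hconv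
end
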